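/- Let μ, ν ∈ ℂ with Re(1-ν) > Re μ > 0, let -∞ < m < M ≤ ∞, let x be a real number with x < m, and let f : (m,M) → ℂ be a measurable function such that ∫_m^M |f(z)| (z-x)^{Re μ + Re ν - 1} dz < ∞. Then ∫_{-∞}^{x} ( ∫_m^M f(z) Γ(1-ν) (z-y)^{ν-1} dz ) · (x-y)^{μ-1}/Γ(μ) dy = ∫_m^M f(z) Γ(1-μ-ν) (z-x)^{μ+ν-1} dz; that is, the fractional integral of order μ of a generalized Stieltjes transform of order 1-ν of f equals the generalized Stieltjes transform of order 1-μ-ν of f. -/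

import Mathlib

open MeasureTheory Set Complex Filter

/-!
Substituting `y = x - (z - x) s / (1 - s)` turns `∫_{y<x} (z - y)^(ν-1) (x - y)^(μ-1) dy` into
`(z - x)^(μ+ν-1) B(μ, 1-μ-ν) = (z - x)^(μ+ν-1) Γ(μ) Γ(1-μ-ν) / Γ(1-ν)`. The same identity with the
exponents replaced by their real parts evaluates the absolute double integral as a multiple of
`∫ |f z| (z - x)^(Re μ + Re ν - 1) dz`, so Fubini allows integrating in `y` first.
-/

lemma ofReal_cpow_eq_exp {r : ℝ} (hr : 0 < r) (w : ℂ) :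
    (r : ℂ) ^ w = exp (Real.log r * w) := by
  rw [cpow_def_of_ne_zero (ofReal_ne_zero.2 hr.ne'), ofReal_log hr.le]

section Substitution

variable (x c : ℝ)

lemma image_sub_mul_div_one_sub_Ioo (hc : 0 < c) :
    (fun s : ℝ => x - c * s / (1 - s)) '' Ioo 0 1 = Iio x := by
  ext y
  refine ⟨?_, fun hy => ⟨(x - y) / (c + (x - y)), ?_, ?_⟩⟩
  · rintro ⟨s, ⟨hs₀, hs₁⟩, rfl⟩
    have : 0 < c * s / (1 - s) := div_pos (mul_pos hc hs₀) (sub_pos.2 hs₁)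
    simpa using this
  · have hy : 0 < x - y := sub_pos.2 hy
    exact ⟨by positivity, (div_lt_one (by positivity)).2 (by linarith)⟩
  · have hy : 0 < x - y := sub_pos.2 hy
    field_simp
    simp [hc.ne']

lemma injOn_sub_mul_div_one_sub (hc : c ≠ 0) :
    InjOn (fun s : ℝ => x - c * s / (1 - s)) (Iio 1) := by
  intro a ha b hb hab
  have ha : 1 - a ≠ 0 := (sub_pos.2 ha).ne'
  have hb : 1 - b ≠ 0 := (sub_pos.2 hb).ne'
  field_simp at hab
  have : c * (a - b) = 0 := by linear_combination -hab
  simpa [hc, sub_eq_zero] using this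

lemma hasDerivAt_sub_mul_div_one_sub {s : ℝ} (hs : s ≠ 1) :
    HasDerivAt (fun s : ℝ => x - c * s / (1 - s)) (-(c / (1 - s) ^ 2)) s := by
  have hs : 1 - s ≠ 0 := sub_ne_zero.2 hs.symm
  refine ((((hasDerivAt_id s).const_mul c).div ((hasDerivAt_id s).const_sub 1) hs).const_sub
    x).congr_deriv ?_
  simp only [id]
  field_simp
  ring

end Substitution

section Kernel

variable {μ ν : ℂ} {x z : ℝ}

lemma abs_deriv_smul_cpow_sub_mul_cpow_sub (μ ν : ℂ) (hxz : x < z) {s : ℝ}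
    (hs : s ∈ Ioo (0 : ℝ) 1) :
    |-((z - x) / (1 - s) ^ 2)| •
        (((z - (x - (z - x) * s / (1 - s)) : ℝ) : ℂ) ^ (ν - 1) *
          (((x - (x - (z - x) * s / (1 - s))) : ℝ) : ℂ) ^ (μ - 1))
      = ((z - x : ℝ) : ℂ) ^ (μ + ν - 1) *
          ((s : ℂ) ^ (μ - 1) * (1 - (s : ℂ)) ^ ((1 - μ - ν) - 1)) := by
  obtain ⟨hs₀, hs₁⟩ := hs
  have hc : 0 < z - x := sub_pos.2 hxz
  have hu : 0 < 1 - s := sub_pos.2 hs₁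
  have hz : z - (x - (z - x) * s / (1 - s)) = (z - x) / (1 - s) := by field_simp; ring
  have hx : x - (x - (z - x) * s / (1 - s)) = (z - x) * s / (1 - s) := by ring
  have habs : |-((z - x) / (1 - s) ^ 2)| = (z - x) / (1 - s) ^ 2 := by
    rw [abs_neg, abs_of_pos (by positivity)]
  have h1s : (1 : ℂ) - s = ((1 - s : ℝ) : ℂ) := by push_cast; ring
  have hd : (((z - x) / (1 - s) ^ 2 : ℝ) : ℂ) = exp (Real.log ((z - x) / (1 - s) ^ 2)) := by
    rw [← ofReal_exp, Real.exp_log (by positivity)]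
  rw [habs, hz, hx, h1s, real_smul, hd, ofReal_cpow_eq_exp (div_pos hc hu),
    ofReal_cpow_eq_exp (by positivity : (0 : ℝ) < (z - x) * s / (1 - s)), ofReal_cpow_eq_exp hc,
    ofReal_cpow_eq_exp hs₀, ofReal_cpow_eq_exp hu, ← exp_add, ← exp_add, ← exp_add, ← exp_add]
  congr 1
  rw [Real.log_div hc.ne' (by positivity), Real.log_div hc.ne' hu.ne',
    Real.log_div (by positivity) hu.ne', Real.log_mul hc.ne' hs₀.ne', Real.log_pow]
  push_cast
  ring

lemma integrableOn_Ioo_betaIntegrand {u v : ℂ} (hu : 0 < u.re) (hv : 0 < v.re) :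
    IntegrableOn (fun s : ℝ => (s : ℂ) ^ (u - 1) * (1 - (s : ℂ)) ^ (v - 1)) (Ioo 0 1) :=
  ((intervalIntegrable_iff_integrableOn_Ioc_of_le zero_le_one).1
    (betaIntegral_convergent hu hv)).mono_set Ioo_subset_Ioc_self

lemma setIntegral_Ioo_betaIntegrand (u v : ℂ) :
    ∫ s in Ioo (0 : ℝ) 1, (s : ℂ) ^ (u - 1) * (1 - (s : ℂ)) ^ (v - 1) = betaIntegral u v := by
  rw [betaIntegral, intervalIntegral.integral_of_le zero_le_one, integral_Ioc_eq_integral_Ioo]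

lemma integrableOn_Iio_cpow_sub_mul_cpow_sub (hμ : 0 < μ.re) (hμν : μ.re + ν.re < 1)
    (hxz : x < z) :
    IntegrableOn (fun y : ℝ => ((z - y : ℝ) : ℂ) ^ (ν - 1) * ((x - y : ℝ) : ℂ) ^ (μ - 1))
      (Iio x) := by
  have hv : 0 < (1 - μ - ν).re := by simp only [sub_re, one_re]; linarith
  rw [← image_sub_mul_div_one_sub_Ioo x (z - x) (sub_pos.2 hxz),
    integrableOn_image_iff_integrableOn_abs_deriv_smul measurableSet_Ioo
      (fun s hs => (hasDerivAt_sub_mul_div_one_sub x (z - x) hs.2.ne).hasDerivWithinAt)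
      ((injOn_sub_mul_div_one_sub x (z - x) (sub_pos.2 hxz).ne').mono Ioo_subset_Iio_self)]
  exact IntegrableOn.congr_fun ((integrableOn_Ioo_betaIntegrand hμ hv).const_mul _)
    (fun s hs => (abs_deriv_smul_cpow_sub_mul_cpow_sub μ ν hxz hs).symm) measurableSet_Ioo

lemma integral_Iio_cpow_sub_mul_cpow_sub (hμ : 0 < μ.re) (hμν : μ.re + ν.re < 1)
    (hxz : x < z) :
    ∫ y in Iio x, ((z - y : ℝ) : ℂ) ^ (ν - 1) * ((x - y : ℝ) : ℂ) ^ (μ - 1)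
      = Gamma μ * Gamma (1 - μ - ν) / Gamma (1 - ν) * ((z - x : ℝ) : ℂ) ^ (μ + ν - 1) := by
  have hv : 0 < (1 - μ - ν).re := by simp only [sub_re, one_re]; linarith
  have hΓ : Gamma (1 - ν) ≠ 0 :=
    Gamma_ne_zero_of_re_pos (by simp only [sub_re, one_re]; linarith)
  have hβ : Gamma μ * Gamma (1 - μ - ν) = Gamma (1 - ν) * betaIntegral μ (1 - μ - ν) := by
    rw [Gamma_mul_Gamma_eq_betaIntegral hμ hv, show μ + (1 - μ - ν) = 1 - ν by ring]
  rw [← image_sub_mul_div_one_sub_Ioo x (z - x) (sub_pos.2 hxz),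
    integral_image_eq_integral_abs_deriv_smul measurableSet_Ioo
      (fun s hs => (hasDerivAt_sub_mul_div_one_sub x (z - x) hs.2.ne).hasDerivWithinAt)
      ((injOn_sub_mul_div_one_sub x (z - x) (sub_pos.2 hxz).ne').mono Ioo_subset_Iio_self),
    setIntegral_congr_fun measurableSet_Ioo
      (fun s hs => abs_deriv_smul_cpow_sub_mul_cpow_sub μ ν hxz hs),
    integral_const_mul, setIntegral_Ioo_betaIntegrand, hβ]
  field_simp

end Kernel

lemma integral_Iio_norm_cpow_sub_mul_cpow_sub {μ ν : ℂ} {x z : ℝ} (hμ : 0 < μ.re)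
    (hμν : μ.re + ν.re < 1) (hxz : x < z) :
    ∫ y in Iio x, ‖((z - y : ℝ) : ℂ) ^ (ν - 1) * ((x - y : ℝ) : ℂ) ^ (μ - 1)‖
      = Real.Gamma μ.re * Real.Gamma (1 - μ.re - ν.re) / Real.Gamma (1 - ν.re) *
          (z - x) ^ (μ.re + ν.re - 1) := by
  have h := integral_Iio_cpow_sub_mul_cpow_sub (μ := μ.re) (ν := ν.re) (by simpa) (by simpa) hxz
  have hnorm : ∀ y ∈ Iio x,
      ((z - y : ℝ) : ℂ) ^ ((ν.re : ℂ) - 1) * ((x - y : ℝ) : ℂ) ^ ((μ.re : ℂ) - 1)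
        = ((‖((z - y : ℝ) : ℂ) ^ (ν - 1) * ((x - y : ℝ) : ℂ) ^ (μ - 1)‖ : ℝ) : ℂ) := by
    intro y hy
    have hzy : 0 < z - y := by linarith [mem_Iio.1 hy]
    have hxy : 0 < x - y := sub_pos.2 hy
    rw [norm_mul, norm_cpow_eq_rpow_re_of_pos hzy, norm_cpow_eq_rpow_re_of_pos hxy, ofReal_mul,
      ofReal_cpow hzy.le, ofReal_cpow hxy.le]
    simp [sub_re]
  rw [setIntegral_congr_fun measurableSet_Iio hnorm, integral_complex_ofReal] at h
  apply ofReal_injective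
  rw [h, ofReal_mul, ofReal_div, ofReal_mul, ofReal_cpow (sub_pos.2 hxz).le, ← Gamma_ofReal,
    ← Gamma_ofReal, ← Gamma_ofReal]
  push_cast
  rfl

theorem integral_Iio_setIntegral_mul_cpow_sub_mul_cpow_sub {μ ν : ℂ} (hμ : 0 < μ.re)
    (hμν : μ.re + ν.re < 1) {x : ℝ} {S : Set ℝ} (hS : MeasurableSet S) (hSx : S ⊆ Ioi x)
    {f : ℝ → ℂ} (hf : AEStronglyMeasurable f (volume.restrict S))
    (hint : IntegrableOn (fun z : ℝ => ‖f z‖ * (z - x) ^ (μ.re + ν.re - 1)) S) :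
    ∫ y in Iio x, ∫ z in S, f z * (((z - y : ℝ) : ℂ) ^ (ν - 1) * ((x - y : ℝ) : ℂ) ^ (μ - 1))
      = Gamma μ * Gamma (1 - μ - ν) / Gamma (1 - ν) *
          ∫ z in S, f z * ((z - x : ℝ) : ℂ) ^ (μ + ν - 1) := by
  have hmeas : AEStronglyMeasurable
      (fun p : ℝ × ℝ => f p.2 * (((p.2 - p.1 : ℝ) : ℂ) ^ (ν - 1) * ((x - p.1 : ℝ) : ℂ) ^ (μ - 1)))
      ((volume.restrict (Iio x)).prod (volume.restrict S)) :=
    hf.comp_snd.mul (by fun_prop : Measurable _).aestronglyMeasurable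
  have hK : Integrable
      (fun p : ℝ × ℝ => f p.2 * (((p.2 - p.1 : ℝ) : ℂ) ^ (ν - 1) * ((x - p.1 : ℝ) : ℂ) ^ (μ - 1)))
      ((volume.restrict (Iio x)).prod (volume.restrict S)) := by
    refine (integrable_prod_iff' hmeas).2 ⟨?_, ?_⟩
    · filter_upwards [ae_restrict_mem hS] with z hz
      exact (integrableOn_Iio_cpow_sub_mul_cpow_sub hμ hμν (hSx hz)).const_mul (f z)
    · refine (hint.const_mul (Real.Gamma μ.re * Real.Gamma (1 - μ.re - ν.re) /
        Real.Gamma (1 - ν.re))).congr ?_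
      filter_upwards [ae_restrict_mem hS] with z hz
      simp only [norm_mul (f z), integral_const_mul,
        integral_Iio_norm_cpow_sub_mul_cpow_sub hμ hμν (hSx hz)]
      ring
  rw [integral_integral_swap hK, ← integral_const_mul]
  refine setIntegral_congr_fun hS fun z hz => ?_
  rw [integral_const_mul, integral_Iio_cpow_sub_mul_cpow_sub hμ hμν (hSx hz)]
  ring

theorem stmt_18_general (μ ν : ℂ) (hμν : μ.re < (1 - ν).re) (hμ : 0 < μ.re)
    (m : ℝ) (M : EReal)
    (x : ℝ) (hxm : x < m) (f : ℝ → ℂ) (hf : Measurable f)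
    (S : Set ℝ) (hS : S = {z : ℝ | m < z ∧ (z : EReal) < M})
    (hint : IntegrableOn (fun z : ℝ => ‖f z‖ * (z - x) ^ (μ.re + ν.re - 1)) S) :
    ∫ y in Iio x,
        (∫ z in S, f z * Complex.Gamma (1 - ν) * ((z - y : ℝ) : ℂ) ^ (ν - 1)) *
          (((x - y : ℝ) : ℂ) ^ (μ - 1) / Complex.Gamma μ)
      = ∫ z in S, f z * Complex.Gamma (1 - μ - ν) * ((z - x : ℝ) : ℂ) ^ (μ + ν - 1) := by
  have hμν' : μ.re + ν.re < 1 := by rw [sub_re, one_re] at hμν; linarith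
  have hSmeas : MeasurableSet S := by rw [hS]; measurability
  have hSx : S ⊆ Ioi x := fun z hz => hxm.trans (hS ▸ hz).1
  have hΓμ : Gamma μ ≠ 0 := Gamma_ne_zero_of_re_pos hμ
  have hΓν : Gamma (1 - ν) ≠ 0 := Gamma_ne_zero_of_re_pos (by linarith)
  calc _ = Gamma (1 - ν) / Gamma μ * ∫ y in Iio x, ∫ z in S,
          f z * (((z - y : ℝ) : ℂ) ^ (ν - 1) * ((x - y : ℝ) : ℂ) ^ (μ - 1)) := by
        rw [← integral_const_mul]
        congr 1 with y
        rw [← integral_mul_const, ← integral_const_mul]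
        congr 1 with z
        ring
    _ = _ := by
        rw [integral_Iio_setIntegral_mul_cpow_sub_mul_cpow_sub hμ hμν' hSmeas hSx
          hf.aestronglyMeasurable hint]
        simp only [mul_right_comm _ (Gamma (1 - μ - ν)), integral_mul_const]
        field_simp

/-- The fractional integral of order `μ` of a generalized Stieltjes transform of order
`1-ν` of `f` equals the generalized Stieltjes transform of order `1-μ-ν` of `f`. -/
theorem stmt_18 (μ ν : ℂ) (hμν : μ.re < (1 - ν).re) (hμ : 0 < μ.re)
    (m : ℝ) (M : EReal) (hmM : (m : EReal) < M)
    (x : ℝ) (hxm : x < m) (f : ℝ → ℂ) (hf : Measurable f)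
    (S : Set ℝ) (hS : S = {z : ℝ | m < z ∧ (z : EReal) < M})
    (hint : IntegrableOn (fun z : ℝ => ‖f z‖ * (z - x) ^ (μ.re + ν.re - 1)) S) :
    ∫ y in Iio x,
        (∫ z in S, f z * Complex.Gamma (1 - ν) * ((z - y : ℝ) : ℂ) ^ (ν - 1)) *
          (((x - y : ℝ) : ℂ) ^ (μ - 1) / Complex.Gamma μ)
      = ∫ z in S, f z * Complex.Gamma (1 - μ - ν) * ((z - x : ℝ) : ℂ) ^ (μ + ν - 1) :=
  stmt_18_general μ ν hμν hμ m M x hxm f hf S hS hint
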